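/- L¹ bound for the mollified tail function (step in the proof of Theorem 5.2): Let Δ be a finite signed Borel measure on [0,∞) with ∫₀^∞ y d|Δ|(y) < ∞, and let ε > 0. Define F^{Δ,ε}(x) := ∫₀^∞ (∫_x^∞ G_ε(z,y) dz) dΔ(y). Then ∫₀^∞ |F^{Δ,ε}(x)| dx ≤ 2 ∫₀^∞ y d|Δ|(y). -/
import Mathlib


open MeasureTheory Set Filter Topology
open scoped ENNReal

/-- The Gaussian kernel `p_ε(x) = (2πε)^{-1/2} exp(-x²/(2ε))`. -/
noncomputable def pker (ε x : ℝ) : ℝ :=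
  (Real.sqrt (2 * Real.pi * ε))⁻¹ * Real.exp (-(x ^ 2) / (2 * ε))

/-- The Dirichlet heat kernel on the half-line `G_ε(x,y) = p_ε(x-y) - p_ε(x+y)`. -/
noncomputable def Gker (ε x y : ℝ) : ℝ := pker ε (x - y) - pker ε (x + y)

lemma pker_nonneg (ε x : ℝ) : 0 ≤ pker ε x := by
  unfold pker; positivity

lemma pker_eq (ε : ℝ) (hε : 0 < ε) :
    pker ε = fun x => (Real.sqrt (2 * Real.pi * ε))⁻¹ * Real.exp (-(1/(2*ε)) * x ^ 2) := by
  funext x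
  unfold pker
  congr 1
  congr 1
  field_simp

lemma pker_integrable {ε : ℝ} (hε : 0 < ε) : Integrable (pker ε) := by
  rw [pker_eq ε hε]
  exact (integrable_exp_neg_mul_sq (by positivity)).const_mul _

lemma pker_integral {ε : ℝ} (hε : 0 < ε) : ∫ x, pker ε x = 1 := by
  rw [pker_eq ε hε]
  rw [MeasureTheory.integral_const_mul, integral_gaussian]
  have h2 : Real.pi / (1 / (2 * ε)) = 2 * Real.pi * ε := by field_simp
  rw [h2]
  refine inv_mul_cancel₀ ?_
  positivity

noncomputable def Aker (ε t : ℝ) : ℝ := ∫ u in Ioi t, pker ε u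

lemma Aker_anti {ε : ℝ} (hε : 0 < ε) : Antitone (Aker ε) := by
  intro s t hst
  exact setIntegral_mono_set ((pker_integrable hε).integrableOn)
    (Eventually.of_forall fun x => pker_nonneg ε x)
    (HasSubset.Subset.eventuallyLE (Ioi_subset_Ioi hst))

lemma Aker_nonneg (ε t : ℝ) : 0 ≤ Aker ε t :=
  setIntegral_nonneg measurableSet_Ioi fun x _ => pker_nonneg ε x

lemma Aker_le_one {ε : ℝ} (hε : 0 < ε) (t : ℝ) : Aker ε t ≤ 1 :=
  (setIntegral_le_integral (pker_integrable hε)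
    (Eventually.of_forall fun x => pker_nonneg ε x)).trans_eq (pker_integral hε)

lemma Aker_measurable {ε : ℝ} (hε : 0 < ε) : Measurable (Aker ε) :=
  (Aker_anti hε).measurable

lemma shift_integral {ε : ℝ} (hε : 0 < ε) (a y : ℝ) :
    ∫ z in Ici a, pker ε (z - y) = Aker ε (a - y) := by
  rw [integral_Ici_eq_integral_Ioi]
  have h : Ioi a = (fun z : ℝ => z - y) ⁻¹' (Ioi (a - y)) := by
    ext z; simp [sub_lt_sub_iff_right]
  rw [h, (measurePreserving_sub_right volume y).setIntegral_preimage_emb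
    (MeasurableEquiv.subRight y).measurableEmbedding]
  rfl

lemma Tker_eq {ε : ℝ} (hε : 0 < ε) (x y : ℝ) :
    (∫ z in Ici x, Gker ε z y) = Aker ε (x - y) - Aker ε (x + y) := by
  have h1 : IntegrableOn (fun z => pker ε (z - y)) (Ici x) :=
    ((pker_integrable hε).comp_sub_right y).integrableOn
  have h2 : IntegrableOn (fun z => pker ε (z + y)) (Ici x) := by
    have := ((pker_integrable hε).comp_sub_right (-y)).integrableOn (s := Ici x)
    simpa [sub_neg_eq_add] using this
  unfold Gker
  rw [integral_sub h1 h2, shift_integral hε x y]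
  congr 1
  have : (fun z => pker ε (z + y)) = fun z => pker ε (z - (-y)) := by
    funext z; rw [sub_neg_eq_add]
  rw [this, shift_integral hε x (-y), sub_neg_eq_add]

lemma Tker_formula {ε : ℝ} (hε : 0 < ε) (x : ℝ) {y : ℝ} (hy : 0 ≤ y) :
    (∫ z in Ici x, Gker ε z y) = ∫ u in Ioc (x - y) (x + y), pker ε u := by
  rw [Tker_eq hε x y]
  have hle : x - y ≤ x + y := by linarith
  have hsplit : Ioc (x - y) (x + y) ∪ Ioi (x + y) = Ioi (x - y) :=
    Ioc_union_Ioi_eq_Ioi hle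
  have hu := setIntegral_union (μ := volume) (f := pker ε)
    (s := Ioc (x - y) (x + y)) (t := Ioi (x + y))
    (Ioc_disjoint_Ioi le_rfl) measurableSet_Ioi
    ((pker_integrable hε).integrableOn) ((pker_integrable hε).integrableOn)
  unfold Aker
  rw [← hsplit, hu]
  ring

lemma Tker_nonneg {ε : ℝ} (hε : 0 < ε) (x : ℝ) {y : ℝ} (hy : 0 ≤ y) :
    0 ≤ ∫ z in Ici x, Gker ε z y := by
  rw [Tker_formula hε x hy]
  exact setIntegral_nonneg measurableSet_Ioc fun u _ => pker_nonneg ε u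

lemma Tker_le_one {ε : ℝ} (hε : 0 < ε) (x y : ℝ) :
    (∫ z in Ici x, Gker ε z y) ≤ 1 := by
  rw [Tker_eq hε x y]
  have h1 := Aker_nonneg ε (x + y)
  have h2 := Aker_le_one hε (x - y)
  linarith

lemma Tker_measurable {ε : ℝ} (hε : 0 < ε) :
    Measurable (fun q : ℝ × ℝ => ∫ z in Ici q.1, Gker ε z q.2) := by
  have h : (fun q : ℝ × ℝ => ∫ z in Ici q.1, Gker ε z q.2)
      = fun q : ℝ × ℝ => Aker ε (q.1 - q.2) - Aker ε (q.1 + q.2) := by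
    funext q; exact Tker_eq hε q.1 q.2
  rw [h]
  exact ((Aker_measurable hε).comp (measurable_fst.sub measurable_snd)).sub
    ((Aker_measurable hε).comp (measurable_fst.add measurable_snd))

lemma pker_measurable (ε : ℝ) : Measurable (pker ε) := by
  unfold pker; fun_prop

lemma key_bound {ε : ℝ} (hε : 0 < ε) (μ : Measure ℝ) [IsFiniteMeasure μ]
    (hμ : μ (Iio 0) = 0) (hmom : Integrable (fun y => y) μ) :
    IntegrableOn (fun x => ∫ y, (∫ z in Ici x, Gker ε z y) ∂μ) (Ioi 0) ∧
    (∫ x in Ioi 0, (∫ y, (∫ z in Ici x, Gker ε z y) ∂μ)) ≤ 2 * ∫ y, y ∂μ ∧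
    ∀ x : ℝ, 0 ≤ ∫ y, (∫ z in Ici x, Gker ε z y) ∂μ := by
  set T : ℝ → ℝ → ℝ := fun x y => ∫ z in Ici x, Gker ε z y with hT
  set g : ℝ → ℝ := fun x => ∫ y, T x y ∂μ with hg
  -- a.e. nonnegativity of y
  have hae : ∀ᵐ y ∂μ, 0 ≤ y := by
    rw [ae_iff]
    have h : {y : ℝ | ¬ 0 ≤ y} = Iio 0 := by ext z; simp [not_le]
    rw [h]; exact hμ
  have hTmeas : Measurable (Function.uncurry T) := Tker_measurable hε
  have hsec : ∀ x : ℝ, AEStronglyMeasurable (fun y => T x y) μ := fun x =>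
    (hTmeas.comp measurable_prodMk_left).aestronglyMeasurable
  have hTnn : ∀ x : ℝ, ∀ᵐ y ∂μ, 0 ≤ T x y := fun x =>
    hae.mono fun y hy => Tker_nonneg hε x hy
  have gnn : ∀ x, 0 ≤ g x := fun x => integral_nonneg_of_ae (hTnn x)
  have g_sm : StronglyMeasurable g := hTmeas.stronglyMeasurable.integral_prod_right'
  -- lintegral form
  set I : ℝ → ℝ≥0∞ := fun x => ∫⁻ y, ENNReal.ofReal (T x y) ∂μ with hI
  have hgI : ∀ x, g x = (I x).toReal := fun x =>
    integral_eq_lintegral_of_nonneg_ae (hTnn x) (hsec x)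
  have hItop : ∀ x, I x ≤ μ univ := by
    intro x
    calc I x ≤ ∫⁻ _, 1 ∂μ := lintegral_mono fun y =>
          ENNReal.ofReal_le_one.mpr (Tker_le_one hε x y)
      _ = μ univ := lintegral_one
  have hIne : ∀ x, I x ≠ ⊤ := fun x => ((hItop x).trans_lt (measure_lt_top μ _)).ne
  -- swap
  set q : ℝ → ℝ≥0∞ := fun u => ENNReal.ofReal (pker ε u) with hq
  have hq_meas : Measurable q := ENNReal.measurable_ofReal.comp (pker_measurable ε)
  have hq_tot : ∫⁻ u, q u = 1 := by
    rw [hq]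
    rw [← ofReal_integral_eq_lintegral_ofReal (pker_integrable hε)
      (Eventually.of_forall fun u => pker_nonneg ε u), pker_integral hε]
    exact ENNReal.ofReal_one
  have hC : ∀ y : ℝ, 0 ≤ y →
      (∫⁻ x in Ioi (0:ℝ), ENNReal.ofReal (T x y)) ≤ ENNReal.ofReal (2 * y) := by
    intro y hy
    have h1 : ∀ x : ℝ, ENNReal.ofReal (T x y)
        = ∫⁻ u, (Ioc (x - y) (x + y)).indicator q u := by
      intro x
      rw [hT]
      simp only
      rw [Tker_formula hε x hy,
        ofReal_integral_eq_lintegral_ofReal ((pker_integrable hε).integrableOn)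
          (Eventually.of_forall fun u => pker_nonneg ε u),
        ← lintegral_indicator measurableSet_Ioc]
    simp_rw [h1]
    have hswap : (∫⁻ x in Ioi (0:ℝ), ∫⁻ u, (Ioc (x - y) (x + y)).indicator q u)
        = ∫⁻ u, ∫⁻ x in Ioi (0:ℝ), (Ioc (x - y) (x + y)).indicator q u := by
      apply lintegral_lintegral_swap
      have hset : MeasurableSet {z : ℝ × ℝ | z.1 - y < z.2 ∧ z.2 ≤ z.1 + y} := by
        apply MeasurableSet.inter
        · exact measurableSet_lt (measurable_fst.sub measurable_const) measurable_snd
        · exact measurableSet_le measurable_snd (measurable_fst.add measurable_const)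
      have heq : Function.uncurry (fun x u => (Ioc (x - y) (x + y)).indicator q u)
          = {z : ℝ × ℝ | z.1 - y < z.2 ∧ z.2 ≤ z.1 + y}.indicator (fun z => q z.2) := by
        funext z
        rcases z with ⟨x, u⟩
        simp only [Function.uncurry, indicator, mem_Ioc, mem_setOf_eq]
      rw [heq]
      exact ((hq_meas.comp measurable_snd).indicator hset).aemeasurable
    rw [hswap]
    have h2 : ∀ u : ℝ, (∫⁻ x in Ioi (0:ℝ), (Ioc (x - y) (x + y)).indicator q u)
        ≤ q u * ENNReal.ofReal (2 * y) := by
      intro u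
      have h3 : ∀ x : ℝ, (Ioc (x - y) (x + y)).indicator q u
          = (Ico (u - y) (u + y)).indicator (fun _ => q u) x := by
        intro x
        by_cases hmem : u ∈ Ioc (x - y) (x + y)
        · rw [indicator_of_mem hmem]
          have : x ∈ Ico (u - y) (u + y) := by
            obtain ⟨ha, hb⟩ := hmem
            constructor <;> [linarith; linarith]
          rw [indicator_of_mem this]
        · rw [indicator_of_notMem hmem]
          have : x ∉ Ico (u - y) (u + y) := by
            intro ⟨ha, hb⟩
            exact hmem ⟨by linarith, by linarith⟩
          rw [indicator_of_notMem this]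
      simp_rw [h3]
      rw [lintegral_indicator measurableSet_Ico, Measure.restrict_restrict measurableSet_Ico,
        setLIntegral_const]
      have hle : volume (Ico (u - y) (u + y) ∩ Ioi 0) ≤ ENNReal.ofReal (2 * y) := by
        calc volume (Ico (u - y) (u + y) ∩ Ioi 0) ≤ volume (Ico (u - y) (u + y)) :=
              measure_mono inter_subset_left
          _ = ENNReal.ofReal (2 * y) := by rw [Real.volume_Ico]; ring_nf
      exact mul_le_mul_right hle _
    calc (∫⁻ u, ∫⁻ x in Ioi (0:ℝ), (Ioc (x - y) (x + y)).indicator q u)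
        ≤ ∫⁻ u, q u * ENNReal.ofReal (2 * y) := lintegral_mono h2
      _ = (∫⁻ u, q u) * ENNReal.ofReal (2 * y) := lintegral_mul_const _ hq_meas
      _ = ENNReal.ofReal (2 * y) := by rw [hq_tot, one_mul]
  -- total lintegral bound
  have hmom2 : Integrable (fun y : ℝ => 2 * y) μ := hmom.const_mul 2
  have hmain : (∫⁻ x in Ioi (0:ℝ), I x) ≤ ENNReal.ofReal (∫ y, 2 * y ∂μ) := by
    have hswap2 : (∫⁻ x in Ioi (0:ℝ), I x)
        = ∫⁻ y, (∫⁻ x in Ioi (0:ℝ), ENNReal.ofReal (T x y)) ∂μ := by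
      apply lintegral_lintegral_swap
      exact (ENNReal.measurable_ofReal.comp hTmeas).aemeasurable
    rw [hswap2, ofReal_integral_eq_lintegral_ofReal hmom2
      (hae.mono fun y hy => by simp only [Pi.zero_apply]; linarith)]
    apply lintegral_mono_ae
    exact hae.mono fun y hy => hC y hy
  have hmain_ne : (∫⁻ x in Ioi (0:ℝ), I x) ≠ ⊤ :=
    (hmain.trans_lt ENNReal.ofReal_lt_top).ne
  -- integrability of g
  have hofReal_g : ∀ x, ENNReal.ofReal (g x) = I x := fun x => by
    rw [hgI x, ENNReal.ofReal_toReal (hIne x)]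
  have hgint : IntegrableOn g (Ioi 0) := by
    refine ⟨g_sm.aestronglyMeasurable.restrict, ?_⟩
    rw [hasFiniteIntegral_iff_norm]
    have : ∀ x, ENNReal.ofReal ‖g x‖ = I x := fun x => by
      rw [Real.norm_eq_abs, abs_of_nonneg (gnn x), hofReal_g x]
    simp_rw [this]
    exact hmain_ne.lt_top
  refine ⟨hgint, ?_, gnn⟩
  have hgeq : (∫ x in Ioi (0:ℝ), g x) = (∫⁻ x in Ioi (0:ℝ), I x).toReal := by
    rw [integral_eq_lintegral_of_nonneg_ae (Eventually.of_forall fun x => gnn x)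
      g_sm.aestronglyMeasurable.restrict]
    congr 1
    exact lintegral_congr hofReal_g
  rw [hgeq]
  calc (∫⁻ x in Ioi (0:ℝ), I x).toReal ≤ (ENNReal.ofReal (∫ y, 2 * y ∂μ)).toReal :=
        ENNReal.toReal_mono ENNReal.ofReal_ne_top hmain
    _ ≤ 2 * ∫ y, y ∂μ := by
        rw [ENNReal.toReal_ofReal (integral_nonneg_of_ae
          (hae.mono fun y hy => by simp only [Pi.zero_apply]; linarith)), integral_const_mul]

/-- L¹ bound for the mollified tail function (step in the proof of Theorem 5.2):
for a finite signed Borel measure `Δ = μp - μn` on `[0,∞)` with finite first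
moment and `ε > 0`, the function `F^{Δ,ε}(x) = ∫₀^∞ (∫_x^∞ G_ε(z,y) dz) dΔ(y)`
satisfies `∫₀^∞ |F^{Δ,ε}(x)| dx ≤ 2 ∫₀^∞ y d|Δ|(y)`. -/
theorem mollified_tail_L1_bound
    (μp μn : Measure ℝ) [IsFiniteMeasure μp] [IsFiniteMeasure μn]
    (hp : μp (Iio 0) = 0) (hn : μn (Iio 0) = 0)
    (hmomp : Integrable (fun y => y) μp) (hmomn : Integrable (fun y => y) μn)
    (ε : ℝ) (hε : 0 < ε) :
    (∫ x in Ioi (0 : ℝ),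
      |(∫ y, (∫ z in Ici x, Gker ε z y) ∂μp) - (∫ y, (∫ z in Ici x, Gker ε z y) ∂μn)|)
      ≤ 2 * ((∫ y, y ∂μp) + (∫ y, y ∂μn)) := by
  obtain ⟨hpi, hpb, hpnn⟩ := key_bound hε μp hp hmomp
  obtain ⟨hni, hnb, hnnn⟩ := key_bound hε μn hn hmomn
  set gp : ℝ → ℝ := fun x => ∫ y, (∫ z in Ici x, Gker ε z y) ∂μp with hgp
  set gn : ℝ → ℝ := fun x => ∫ y, (∫ z in Ici x, Gker ε z y) ∂μn with hgn
  have habs : ∀ x, |gp x - gn x| ≤ gp x + gn x := fun x => by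
    rw [abs_sub_le_iff]
    constructor <;> linarith [hpnn x, hnnn x]
  calc (∫ x in Ioi (0:ℝ), |gp x - gn x|)
      ≤ ∫ x in Ioi (0:ℝ), (gp x + gn x) :=
        integral_mono ((hpi.sub hni).abs) (hpi.add hni) habs
    _ = (∫ x in Ioi (0:ℝ), gp x) + ∫ x in Ioi (0:ℝ), gn x := integral_add hpi hni
    _ ≤ 2 * ∫ y, y ∂μp + 2 * ∫ y, y ∂μn := add_le_add hpb hnb
    _ = 2 * ((∫ y, y ∂μp) + (∫ y, y ∂μn)) := by ring
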